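/- Let n ≥ 3, let V be an n-dimensional real vector space with a positive definite symmetric bilinear form h, let 𝒮 be an h-self-adjoint endomorphism with exactly three distinct eigenvalues λ₀, λ₁, λ₂ of multiplicities 1, n₁, n₂ respectively (1 + n₁ + n₂ = n); set S(X,Y) = h(X,𝒮Y), R* = (1/2) S∧S, α = λ₀+λ₁+λ₂, β = −λ₀(λ₁+λ₂) − λ₁λ₂, γ = λ₀λ₁λ₂, A = (Ric(R*))² + ((α − tr(𝒮))² + β)·Ric(R*) − γ(α − 2·tr(𝒮))·h, and μ = γ + (α − tr(𝒮))(β + tr(𝒮)(α − tr(𝒮))). Then A = μ·S, and μ = (λ₀ + (n₁−1)λ₁ + (n₂−1)λ₂)·(λ₁λ₂ + (n₁λ₁ + n₂λ₂)((n₁−1)λ₁ + (n₂−1)λ₂)). Moreover: (i) if μ = 0 then (Ric(R*))² is a linear combination of Ric(R*) and h (affine partially Einstein* point); (ii) if μ ≠ 0 then R* = (1/(2μ²))·A∧A. -/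

import Mathlib

/-
The three eigenspaces of 𝒮 fill V by the dimension count 1 + n₁ + n₂ = n. Hence 𝒮 is annihilated by
m(x) = (x - λ₀)(x - λ₁)(x - λ₂) = x³ - αx² - βx - γ, and tr 𝒮 = λ₀ + n₁λ₁ + n₂λ₂.
Contracting R* = ½ S∧S gives Ric(R*) = (tr 𝒮) S - S², so the Ricci endomorphism is
𝒟 = τ𝒮 - 𝒮² with τ = tr 𝒮, and the endomorphism of A is p(𝒮) for
p(x) = (τx - x²)² + ((α - τ)² + β)(τx - x²) - γ(α - 2τ). Division by m leaves the remainder μx: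
p(x) = μx + (x + α - 2τ) m(x), so A = μS. For μ = 0 this is the partially Einstein* relation;
for μ ≠ 0 substitute S = A/μ into R* = ½ S∧S.
-/

namespace OVAff

variable {V : Type*} [AddCommGroup V] [Module ℝ V]

/-- Kulkarni–Nomizu product of two (0,2)-tensors. -/
noncomputable def KN (E F : V → V → ℝ) : V → V → V → V → ℝ := fun X₁ X₂ X₃ X₄ =>
  E X₁ X₄ * F X₂ X₃ + E X₂ X₃ * F X₁ X₄ - E X₁ X₃ * F X₂ X₄ - E X₂ X₄ * F X₁ X₃

/-- Kulkarni–Nomizu product of a (0,2)-tensor with a (0,4)-tensor. -/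
noncomputable def KN4 (E : V → V → ℝ) (T : V → V → V → V → ℝ) :
    V → V → V → V → V → V → ℝ := fun X₁ X₂ X₃ X₄ Y₁ Y₂ =>
  E X₁ X₄ * T X₂ X₃ Y₁ Y₂ + E X₂ X₃ * T X₁ X₄ Y₁ Y₂
    - E X₁ X₃ * T X₂ X₄ Y₁ Y₂ - E X₂ X₄ * T X₁ X₃ Y₁ Y₂

/-- (X ∧_A Y) Z = A(Y,Z) X − A(X,Z) Y. -/
noncomputable def wedgeVec (A : V → V → ℝ) (X Y Z : V) : V := A Y Z • X - A X Z • Y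

/-- Tachibana operator Q(A,T) on a (0,2)-tensor T. -/
noncomputable def Q2 (A T : V → V → ℝ) : V → V → V → V → ℝ :=
  fun X₁ X₂ X Y => -(T (wedgeVec A X Y X₁) X₂ + T X₁ (wedgeVec A X Y X₂))

/-- Tachibana operator Q(A,T) on a (0,4)-tensor T. -/
noncomputable def Q4 (A : V → V → ℝ) (T : V → V → V → V → ℝ) :
    V → V → V → V → V → V → ℝ := fun X₁ X₂ X₃ X₄ X Y =>
  -(T (wedgeVec A X Y X₁) X₂ X₃ X₄ + T X₁ (wedgeVec A X Y X₂) X₃ X₄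
    + T X₁ X₂ (wedgeVec A X Y X₃) X₄ + T X₁ X₂ X₃ (wedgeVec A X Y X₄))

/-- The derivation B·T of a curvature operator family ℬ (with h(ℬ(X,Y)Z,W)=B(X,Y,Z,W))
acting on a (0,2)-tensor T. -/
noncomputable def dot2 (ℬ : V → V → V → V) (T : V → V → ℝ) : V → V → V → V → ℝ :=
  fun X₁ X₂ X Y => -(T (ℬ X Y X₁) X₂ + T X₁ (ℬ X Y X₂))

/-- The derivation B·T acting on a (0,4)-tensor T. -/
noncomputable def dot4 (ℬ : V → V → V → V) (T : V → V → V → V → ℝ) :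
    V → V → V → V → V → V → ℝ := fun X₁ X₂ X₃ X₄ X Y =>
  -(T (ℬ X Y X₁) X₂ X₃ X₄ + T X₁ (ℬ X Y X₂) X₃ X₄
    + T X₁ X₂ (ℬ X Y X₃) X₄ + T X₁ X₂ X₃ (ℬ X Y X₄))

/-- Ricci contraction of a (0,4)-tensor with respect to an h-orthonormal basis `e`
with signs `ε`. -/
noncomputable def ricci {n : ℕ} (ε : Fin n → ℝ) (e : Fin n → V)
    (B : V → V → V → V → ℝ) : V → V → ℝ :=
  fun X Y => ∑ j, ε j * B (e j) X Y (e j)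

/-- Scalar curvature of a (0,4)-tensor. -/
noncomputable def scal {n : ℕ} (ε : Fin n → ℝ) (e : Fin n → V)
    (B : V → V → V → V → ℝ) : ℝ :=
  ∑ j, ε j * ricci ε e B (e j) (e j)

/-- Weyl tensor of a (0,4)-tensor with respect to the metric h. -/
noncomputable def weyl {n : ℕ} (h : V → V → ℝ) (ε : Fin n → ℝ) (e : Fin n → V)
    (B : V → V → V → V → ℝ) : V → V → V → V → ℝ := fun X₁ X₂ X₃ X₄ =>
  B X₁ X₂ X₃ X₄ - (1 / ((n : ℝ) - 2)) * KN h (ricci ε e B) X₁ X₂ X₃ X₄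
    + (scal ε e B / (2 * ((n : ℝ) - 2) * ((n : ℝ) - 1))) * KN h h X₁ X₂ X₃ X₄


end OVAff

open Module Polynomial

namespace LinearMap.BilinForm

variable {R M ι : Type*} [CommRing R] [AddCommGroup M] [Module R M] [Fintype ι] [DecidableEq ι]
  {h : LinearMap.BilinForm R M} {e : Basis ι R M}

theorem apply_basis_left_eq_repr (he : ∀ j k, h (e j) (e k) = if j = k then (1 : R) else 0)
    (j : ι) (v : M) : h (e j) v = e.repr v j := by
  conv_lhs => rw [← e.sum_repr v]
  simp only [map_sum, map_smul, smul_eq_mul, he, mul_ite, mul_one, mul_zero,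
    Finset.sum_ite_eq, Finset.mem_univ, if_true]

theorem sum_apply_basis_mul_apply_basis
    (he : ∀ j k, h (e j) (e k) = if j = k then (1 : R) else 0) (u v : M) :
    ∑ j, h u (e j) * h (e j) v = h u v := by
  conv_rhs => rw [← e.sum_repr v]
  simp only [map_sum, map_smul, smul_eq_mul, apply_basis_left_eq_repr he, mul_comm]

theorem trace_eq_sum_apply_basis (he : ∀ j k, h (e j) (e k) = if j = k then (1 : R) else 0)
    (f : M →ₗ[R] M) : LinearMap.trace R M f = ∑ j, h (e j) (f (e j)) := by
  simp [LinearMap.trace_eq_matrix_trace R e, Matrix.trace, LinearMap.toMatrix_apply,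
    apply_basis_left_eq_repr he]

end LinearMap.BilinForm

namespace Module.End

section CommRing

variable {R M ι : Type*} [CommRing R] [AddCommGroup M] [Module R M]

theorem aeval_eq_zero_of_iSup_eigenspace_eq_top (f : End R M) (l : ι → R)
    (htop : ⨆ i, f.eigenspace (l i) = ⊤) {p : R[X]} (hp : ∀ i, p.eval (l i) = 0) :
    aeval f p = 0 := by
  refine LinearMap.ker_eq_top.mp (eq_top_iff.mpr (htop ▸ iSup_le fun i x hx => ?_))
  rw [LinearMap.mem_ker, aeval_apply_of_mem_apply_eq_smul (mem_eigenspace_iff.mp hx), hp,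
    zero_smul]

end CommRing

section Field

variable {K M ι : Type*} [Field K] [AddCommGroup M] [Module K M] [FiniteDimensional K M]

theorem trace_eq_sum_mul_finrank_eigenspace [Fintype ι] [DecidableEq ι] (f : End K M) (l : ι → K)
    (hf : DirectSum.IsInternal fun i => f.eigenspace (l i)) :
    LinearMap.trace K M f = ∑ i, l i * finrank K (f.eigenspace (l i)) := by
  have hmaps : ∀ i, Set.MapsTo f (f.eigenspace (l i)) (f.eigenspace (l i)) := fun i x hx => by
    rw [SetLike.mem_coe, mem_eigenspace_iff] at hx ⊢
    rw [hx, map_smul, hx]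
  rw [LinearMap.trace_eq_sum_trace_restrict hf hmaps]
  refine Finset.sum_congr rfl fun i _ => ?_
  have hscalar : f.restrict (hmaps i) = l i • LinearMap.id :=
    LinearMap.ext fun x => Subtype.ext (mem_eigenspace_iff.mp x.2)
  rw [hscalar, map_smul, LinearMap.trace_id, smul_eq_mul]

theorem isInternal_eigenspace_fin_three (f : End K M) {a b c : K}
    (hab : a ≠ b) (hac : a ≠ c) (hbc : b ≠ c)
    (hdim : finrank K (f.eigenspace a) + finrank K (f.eigenspace b)
      + finrank K (f.eigenspace c) = finrank K M) :
    DirectSum.IsInternal fun i => f.eigenspace (![a, b, c] i) := by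
  have hinj : Function.Injective ![a, b, c] := by
    simp only [Matrix.vecCons, Fin.cons_injective_iff]
    simp [hab, hac, hbc, Function.Injective, eq_iff_true_of_subsingleton]
  have hindep : iSupIndep fun i => f.eigenspace (![a, b, c] i) :=
    (eigenspaces_iSupIndep f).comp hinj
  refine DirectSum.isInternal_submodule_of_iSupIndep_of_iSup_eq_top hindep ?_
  have ha : Disjoint (f.eigenspace a) (f.eigenspace b ⊔ f.eigenspace c) :=
    (iSupIndep_fin_three.mp hindep).1
  have hdisj : Disjoint (f.eigenspace b) (f.eigenspace c) :=
    hindep.pairwiseDisjoint (i := 1) (j := 2) (by decide)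
  have hfinrank_bc := Submodule.finrank_sup_add_finrank_inf_eq (f.eigenspace b) (f.eigenspace c)
  rw [hdisj.eq_bot, finrank_bot] at hfinrank_bc
  rw [iSup_fin_three, sup_assoc]
  change f.eigenspace a ⊔ (f.eigenspace b ⊔ f.eigenspace c) = ⊤
  exact Submodule.eq_top_of_disjoint _ _ (by omega) ha

theorem aeval_eq_zero_of_finrank_eigenspace_fin_three (f : End K M) {a b c : K}
    (hab : a ≠ b) (hac : a ≠ c) (hbc : b ≠ c)
    (hdim : finrank K (f.eigenspace a) + finrank K (f.eigenspace b)
      + finrank K (f.eigenspace c) = finrank K M) :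
    aeval f ((X - C a) * (X - C b) * (X - C c)) = 0 :=
  aeval_eq_zero_of_iSup_eigenspace_eq_top f _
    (isInternal_eigenspace_fin_three f hab hac hbc hdim).submodule_iSup_eq_top
    fun i => by fin_cases i <;> simp

theorem trace_eq_of_finrank_eigenspace_fin_three (f : End K M) {a b c : K}
    (hab : a ≠ b) (hac : a ≠ c) (hbc : b ≠ c)
    (hdim : finrank K (f.eigenspace a) + finrank K (f.eigenspace b)
      + finrank K (f.eigenspace c) = finrank K M) :
    LinearMap.trace K M f = a * finrank K (f.eigenspace a) + b * finrank K (f.eigenspace b)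
      + c * finrank K (f.eigenspace c) := by
  rw [trace_eq_sum_mul_finrank_eigenspace f _ (isInternal_eigenspace_fin_three f hab hac hbc hdim),
    Fin.sum_univ_three]
  rfl

end Field

end Module.End

section CubicIdentity

variable {R E : Type*} [CommRing R] [Ring E] [Algebra R E]

theorem sq_add_smul_sub_smul_one_eq_smul_of_aeval_eq_zero (s : E) {l₀ l₁ l₂ τ α β γ μ : R}
    (hs : aeval s ((X - C l₀) * (X - C l₁) * (X - C l₂)) = 0)
    (hα : α = l₀ + l₁ + l₂) (hβ : β = -(l₀ * (l₁ + l₂)) - l₁ * l₂) (hγ : γ = l₀ * l₁ * l₂)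
    (hμ : μ = γ + (α - τ) * (β + τ * (α - τ))) :
    (τ • s - s ^ 2) ^ 2 + ((α - τ) ^ 2 + β) • (τ • s - s ^ 2) - (γ * (α - 2 * τ)) • 1
      = μ • s := by
  have hP : (C τ * X - X ^ 2) ^ 2 + C ((α - τ) ^ 2 + β) * (C τ * X - X ^ 2)
      - C (γ * (α - 2 * τ))
      = C μ * X + (X + C (α - 2 * τ)) * ((X - C l₀) * (X - C l₁) * (X - C l₂)) := by
    subst hα hβ hγ hμ
    simp only [map_add, map_sub, map_mul, map_neg, map_pow, map_ofNat]
    ring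
  simpa [Algebra.smul_def, hs] using congrArg (aeval s) hP

end CubicIdentity

namespace OVAff

variable {V : Type*}

theorem KN_smul_smul (a b : ℝ) (E F : V → V → ℝ) :
    KN (a • E) (b • F) = (a * b) • KN E F := by
  funext X₁ X₂ X₃ X₄
  simp only [KN, Pi.smul_apply, smul_eq_mul]
  ring

variable [AddCommGroup V] [Module ℝ V]

theorem ricci_half_KN_self {n : ℕ}
    {h : LinearMap.BilinForm ℝ V} {e : Basis (Fin n) ℝ V}
    (he : ∀ j k, h (e j) (e k) = if j = k then (1 : ℝ) else 0)
    {𝒮 : V →ₗ[ℝ] V} (hsa : ∀ u v, h (𝒮 u) v = h u (𝒮 v)) (u v : V) :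
    ricci (fun _ => 1) e (fun X₁ X₂ X₃ X₄ => (1 / 2 : ℝ)
        * KN (fun X Y => h X (𝒮 Y)) (fun X Y => h X (𝒮 Y)) X₁ X₂ X₃ X₄) u v
      = LinearMap.trace ℝ V 𝒮 * h u (𝒮 v) - h (𝒮 u) (𝒮 v) := by
  rw [LinearMap.BilinForm.trace_eq_sum_apply_basis he, Finset.sum_mul,
    ← LinearMap.BilinForm.sum_apply_basis_mul_apply_basis he (𝒮 u) (𝒮 v), ricci,
    ← Finset.sum_sub_distrib]
  refine Finset.sum_congr rfl fun j _ => ?_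
  simp only [KN, ← hsa u (e j)]
  ring

theorem statement12_general
    {V : Type*} [AddCommGroup V] [Module ℝ V]
    (n : ℕ)
    (h : LinearMap.BilinForm ℝ V)
    (hnd : ∀ X : V, (∀ Y, h X Y = 0) → X = 0)
    [FiniteDimensional ℝ V] (hdim : Module.finrank ℝ V = n)
    (e : Module.Basis (Fin n) ℝ V)
    (he : ∀ j k, h (e j) (e k) = if j = k then (1 : ℝ) else 0)
    (𝒮 : V →ₗ[ℝ] V) (hsa : ∀ X Y, h (𝒮 X) Y = h X (𝒮 Y))
    (S : V → V → ℝ) (hS : S = fun X Y => h X (𝒮 Y))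
    (Rstar : V → V → V → V → ℝ)
    (hRstar : Rstar = fun X₁ X₂ X₃ X₄ => (1 / 2 : ℝ) * KN S S X₁ X₂ X₃ X₄)
    (l₀ l₁ l₂ : ℝ) (h01 : l₀ ≠ l₁) (h02 : l₀ ≠ l₂) (h12 : l₁ ≠ l₂)
    (n₁ n₂ : ℕ) (hsum : 1 + n₁ + n₂ = n)
    (hm₀ : Module.finrank ℝ ↥(Module.End.eigenspace 𝒮 l₀) = 1)
    (hm₁ : Module.finrank ℝ ↥(Module.End.eigenspace 𝒮 l₁) = n₁)
    (hm₂ : Module.finrank ℝ ↥(Module.End.eigenspace 𝒮 l₂) = n₂)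
    (α β γ : ℝ)
    (hα : α = l₀ + l₁ + l₂)
    (hβ : β = -(l₀ * (l₁ + l₂)) - l₁ * l₂)
    (hγ : γ = l₀ * l₁ * l₂)
    (Ric : V → V → ℝ) (hRic : Ric = ricci (fun _ => (1 : ℝ)) (⇑e) Rstar)
    (𝒟 : V →ₗ[ℝ] V) (h𝒟 : ∀ X Y, h (𝒟 X) Y = Ric X Y)
    (A : V → V → ℝ)
    (hA : A = fun X Y => Ric (𝒟 X) Y
      + ((α - LinearMap.trace ℝ V 𝒮) ^ 2 + β) * Ric X Y
      - γ * (α - 2 * LinearMap.trace ℝ V 𝒮) * h X Y)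
    (μ : ℝ)
    (hμ : μ = γ + (α - LinearMap.trace ℝ V 𝒮)
      * (β + LinearMap.trace ℝ V 𝒮 * (α - LinearMap.trace ℝ V 𝒮))) :
    (∀ X Y, A X Y = μ * S X Y) ∧
    (μ = (l₀ + ((n₁ : ℝ) - 1) * l₁ + ((n₂ : ℝ) - 1) * l₂)
      * (l₁ * l₂ + ((n₁ : ℝ) * l₁ + (n₂ : ℝ) * l₂)
          * (((n₁ : ℝ) - 1) * l₁ + ((n₂ : ℝ) - 1) * l₂))) ∧
    (μ = 0 → ∃ ρ₁ ρ₂ : ℝ, ∀ X Y, Ric (𝒟 X) Y = ρ₁ * Ric X Y + ρ₂ * h X Y) ∧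
    (μ ≠ 0 → ∀ X₁ X₂ X₃ X₄,
      Rstar X₁ X₂ X₃ X₄ = (1 / (2 * μ ^ 2)) * KN A A X₁ X₂ X₃ X₄) := by
  set τ := LinearMap.trace ℝ V 𝒮 with hτ
  have hfinrank_sum : finrank ℝ (End.eigenspace 𝒮 l₀) + finrank ℝ (End.eigenspace 𝒮 l₁)
      + finrank ℝ (End.eigenspace 𝒮 l₂) = finrank ℝ V := by
    rw [hm₀, hm₁, hm₂, hdim, hsum]
  have hcubic := End.aeval_eq_zero_of_finrank_eigenspace_fin_three 𝒮 h01 h02 h12 hfinrank_sum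
  have htrace : τ = l₀ + n₁ * l₁ + n₂ * l₂ := by
    rw [hτ, End.trace_eq_of_finrank_eigenspace_fin_three 𝒮 h01 h02 h12 hfinrank_sum, hm₀, hm₁, hm₂]
    push_cast
    ring
  have hRicci : ∀ u v, Ric u v = τ * h u (𝒮 v) - h (𝒮 u) (𝒮 v) := by
    subst hRic hRstar hS
    exact ricci_half_KN_self he hsa
  have h𝒟eq : 𝒟 = τ • 𝒮 - 𝒮 ^ 2 := LinearMap.ext fun u => sub_eq_zero.mp <| hnd _ fun v => by
    simp only [map_sub, LinearMap.sub_apply, h𝒟, hRicci, LinearMap.smul_apply, pow_two,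
      End.mul_apply, map_smul, smul_eq_mul, hsa]
    ring
  have hAμS : A = μ • S := by
    have hop := sq_add_smul_sub_smul_one_eq_smul_of_aeval_eq_zero 𝒮 hcubic hα hβ hγ hμ
    rw [← h𝒟eq] at hop
    funext u v
    have := congrArg (fun T : End ℝ V => h (T u) v) hop
    simp only [pow_two, LinearMap.sub_apply, LinearMap.add_apply, End.mul_apply,
      LinearMap.smul_apply, End.one_apply, map_sub, map_add, map_smul, h𝒟, smul_eq_mul, hA, hS,
      ← hsa, Pi.smul_apply] at this ⊢
    linear_combination this
  refine ⟨fun u v => congrFun (congrFun hAμS u) v, ?_, ?_, ?_⟩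
  · rw [hμ, htrace, hα, hβ, hγ]
    ring
  · intro hμ0
    refine ⟨-((α - τ) ^ 2 + β), γ * (α - 2 * τ), fun u v => ?_⟩
    have := congrFun (congrFun hAμS u) v
    simp only [hA, hμ0, zero_smul, Pi.zero_apply] at this
    linarith
  · intro hμ0 X₁ X₂ X₃ X₄
    simp only [hRstar, hAμS, KN_smul_smul, Pi.smul_apply, smul_eq_mul]
    field_simp

/-- three distinct affine principal curvatures λ₀, λ₁, λ₂ with multiplicities
1, n₁, n₂: the identity A = μ·S, the product formula for μ, and its two consequences. -/
theorem statement12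
    {V : Type*} [AddCommGroup V] [Module ℝ V]
    (n : ℕ) (hn : 3 ≤ n)
    (h : LinearMap.BilinForm ℝ V)
    (hsymm : ∀ X Y, h X Y = h Y X)
    (hnd : ∀ X : V, (∀ Y, h X Y = 0) → X = 0)
    [FiniteDimensional ℝ V] (hdim : Module.finrank ℝ V = n)
    (hpos : ∀ X : V, X ≠ 0 → 0 < h X X)
    (e : Module.Basis (Fin n) ℝ V)
    (he : ∀ j k, h (e j) (e k) = if j = k then (1 : ℝ) else 0)
    (𝒮 : V →ₗ[ℝ] V) (hsa : ∀ X Y, h (𝒮 X) Y = h X (𝒮 Y))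
    (S : V → V → ℝ) (hS : S = fun X Y => h X (𝒮 Y))
    (Rstar : V → V → V → V → ℝ)
    (hRstar : Rstar = fun X₁ X₂ X₃ X₄ => (1 / 2 : ℝ) * KN S S X₁ X₂ X₃ X₄)
    (l₀ l₁ l₂ : ℝ) (h01 : l₀ ≠ l₁) (h02 : l₀ ≠ l₂) (h12 : l₁ ≠ l₂)
    (n₁ n₂ : ℕ) (hsum : 1 + n₁ + n₂ = n)
    (heig : ∀ t : ℝ, Module.End.HasEigenvalue 𝒮 t ↔ t = l₀ ∨ t = l₁ ∨ t = l₂)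
    (hm₀ : Module.finrank ℝ ↥(Module.End.eigenspace 𝒮 l₀) = 1)
    (hm₁ : Module.finrank ℝ ↥(Module.End.eigenspace 𝒮 l₁) = n₁)
    (hm₂ : Module.finrank ℝ ↥(Module.End.eigenspace 𝒮 l₂) = n₂)
    (α β γ : ℝ)
    (hα : α = l₀ + l₁ + l₂)
    (hβ : β = -(l₀ * (l₁ + l₂)) - l₁ * l₂)
    (hγ : γ = l₀ * l₁ * l₂)
    (Ric : V → V → ℝ) (hRic : Ric = ricci (fun _ => (1 : ℝ)) (⇑e) Rstar)
    (𝒟 : V →ₗ[ℝ] V) (h𝒟 : ∀ X Y, h (𝒟 X) Y = Ric X Y)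
    (A : V → V → ℝ)
    (hA : A = fun X Y => Ric (𝒟 X) Y
      + ((α - LinearMap.trace ℝ V 𝒮) ^ 2 + β) * Ric X Y
      - γ * (α - 2 * LinearMap.trace ℝ V 𝒮) * h X Y)
    (μ : ℝ)
    (hμ : μ = γ + (α - LinearMap.trace ℝ V 𝒮)
      * (β + LinearMap.trace ℝ V 𝒮 * (α - LinearMap.trace ℝ V 𝒮))) :
    (∀ X Y, A X Y = μ * S X Y) ∧
    (μ = (l₀ + ((n₁ : ℝ) - 1) * l₁ + ((n₂ : ℝ) - 1) * l₂)
      * (l₁ * l₂ + ((n₁ : ℝ) * l₁ + (n₂ : ℝ) * l₂)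
          * (((n₁ : ℝ) - 1) * l₁ + ((n₂ : ℝ) - 1) * l₂))) ∧
    (μ = 0 → ∃ ρ₁ ρ₂ : ℝ, ∀ X Y, Ric (𝒟 X) Y = ρ₁ * Ric X Y + ρ₂ * h X Y) ∧
    (μ ≠ 0 → ∀ X₁ X₂ X₃ X₄,
      Rstar X₁ X₂ X₃ X₄ = (1 / (2 * μ ^ 2)) * KN A A X₁ X₂ X₃ X₄) :=
  statement12_general n h hnd hdim e he 𝒮 hsa S hS Rstar hRstar l₀ l₁ l₂ h01 h02 h12 n₁ n₂ hsum hm₀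
    hm₁ hm₂ α β γ hα hβ hγ Ric hRic 𝒟 h𝒟 A hA μ hμ

end OVAff
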